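/- arXiv:1212.5432 — 2 statements merged into one kernel-verified Lean document; each statement's English description precedes it below -/
import Mathlib

section
/- Let R be a commutative ring such that for every maximal ideal m of R, the residue field R/m has more than 2 elements. Then the ideal of R generated by the set {θ² − θ : θ ∈ R} is all of R. -/
theorem span_sq_sub_self_eq_top {R : Type*} [CommRing R]
    (h : ∀ m : Ideal R, m.IsMaximal → IsEmpty ((R ⧸ m) ≃+* ZMod 2)) :
    Ideal.span {x : R | ∃ θ : R, x = θ ^ 2 - θ} = ⊤ := by
  by_contra hne
  obtain ⟨m, hm, hle⟩ := Ideal.exists_le_maximal _ hne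
  letI : Field (R ⧸ m) := Ideal.Quotient.field m
  have key : ∀ x : R ⧸ m, x ^ 2 = x := by
    intro x
    obtain ⟨θ, rfl⟩ := Ideal.Quotient.mk_surjective x
    have h1 : (θ ^ 2 - θ : R) ∈ m := hle (Ideal.subset_span ⟨θ, rfl⟩)
    have h2 := Ideal.Quotient.eq_zero_iff_mem.mpr h1
    rw [map_sub, map_pow] at h2
    linear_combination h2
  have h2 : (2 : R ⧸ m) = 0 := by linear_combination key 2
  haveI : CharP (R ⧸ m) 2 := (CharP.charP_iff_prime_eq_zero Nat.prime_two).mpr h2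
  let f : ZMod 2 →+* R ⧸ m := ZMod.castHom dvd_rfl (R ⧸ m)
  have hsurj : Function.Surjective f := by
    intro x
    have hx : x * (x - 1) = 0 := by linear_combination key x
    rcases mul_eq_zero.mp hx with h0 | h1
    · exact ⟨0, by simp [f, h0]⟩
    · exact ⟨1, by simp [f, (sub_eq_zero.mp h1).symm]⟩
  exact (h m hm).false (RingEquiv.ofBijective f ⟨f.injective, hsurj⟩).symm
end

section
/- Let R be a commutative ring, I, J ideals of R, n ≥ 2, and let A, B ∈ GL(n, R) be such that every entry of A − 1 lies in I and every entry of B − 1 lies in J. Then every entry of the commutator A*B*A⁻¹*B⁻¹ minus the identity lies in the ideal I*J + J*I = I*J. -/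
theorem gl_commutator_level {R : Type*} [CommRing R] (I J : Ideal R)
    (n : ℕ) (hn : 2 ≤ n) (A B : GL (Fin n) R)
    (hA : ∀ i j : Fin n, ((A : Matrix (Fin n) (Fin n) R) - 1) i j ∈ I)
    (hB : ∀ i j : Fin n, ((B : Matrix (Fin n) (Fin n) R) - 1) i j ∈ J) :
    ∀ i j : Fin n,
      (((A * B * A⁻¹ * B⁻¹ : GL (Fin n) R) : Matrix (Fin n) (Fin n) R) - 1) i j ∈ I * J := by
  intro i j
  set a : Matrix (Fin n) (Fin n) R := (A : Matrix (Fin n) (Fin n) R) with ha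
  set b : Matrix (Fin n) (Fin n) R := (B : Matrix (Fin n) (Fin n) R) with hb
  set a' : Matrix (Fin n) (Fin n) R := ((A⁻¹ : GL (Fin n) R) : Matrix (Fin n) (Fin n) R) with ha'
  set b' : Matrix (Fin n) (Fin n) R := ((B⁻¹ : GL (Fin n) R) : Matrix (Fin n) (Fin n) R) with hb'
  have haa' : a * a' = 1 := by
    have := A.mul_inv
    simpa [ha, ha'] using congrArg (Units.val) this
  have hbb' : b * b' = 1 := by
    have := B.mul_inv
    simpa [hb, hb'] using congrArg (Units.val) this
  have hco : ((A * B * A⁻¹ * B⁻¹ : GL (Fin n) R) : Matrix (Fin n) (Fin n) R)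
      = a * b * a' * b' := rfl
  have key : ((A * B * A⁻¹ * B⁻¹ : GL (Fin n) R) : Matrix (Fin n) (Fin n) R) - 1
      = ((a - 1) * (b - 1) - (b - 1) * (a - 1)) * (a' * b') := by
    rw [hco]
    have h1 : ((a - 1) * (b - 1) - (b - 1) * (a - 1)) = a * b - b * a := by noncomm_ring
    rw [h1, Matrix.sub_mul]
    have h2 : b * a * (a' * b') = 1 := by
      rw [show b * a * (a' * b') = b * (a * a') * b' by noncomm_ring, haa', mul_one, hbb']
    rw [h2, mul_assoc]
  rw [key]
  rw [Matrix.mul_apply]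
  refine Ideal.sum_mem _ fun k _ => ?_
  refine Ideal.mul_mem_right _ _ ?_
  rw [Matrix.sub_apply, Matrix.mul_apply, Matrix.mul_apply]
  refine Submodule.sub_mem _ (Ideal.sum_mem _ fun l _ => ?_) (Ideal.sum_mem _ fun l _ => ?_)
  · exact Ideal.mul_mem_mul (hA i l) (hB l k)
  · rw [mul_comm ((b - 1) i l)]
    exact Ideal.mul_mem_mul (hA l k) (hB i l)
end
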